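/- Let a < b, let n ∈ ℕ with n ≥ 2, let α : [a,b]×[a,b] → (0, 1−1/n) and β : [a,b]×[a,b] → (1/n, 1). Let h₂, h₅ : [a,b] → ℝ be continuous; let h₃ : [a,b] → ℝ be differentiable with continuous derivative; let h₄ : [a,b] → ℝ be continuous such that t ↦ (ₜI^{1−α}_b h₄)(t) is absolutely continuous with continuous derivative. Then for every η ∈ C¹([a,b];ℝ) with η(a) = η(b) = 0 such that (ᶜₐD^{α}_t η) and (ₐI^{β}_t η) are continuous on [a,b], one has ∫_a^b [ h₂(t)η(t) + h₃(t)η′(t) + h₄(t)(ᶜₐD^{α}_t η)(t) + h₅(t)(ₐI^{β}_t η)(t) ] dt = ∫_a^b η(t) [ h₂(t) − h₃′(t) + (ₜD^{α}_b h₄)(t) + (ₜI^{β}_b h₅)(t) ] dt. -/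

import Mathlib

open MeasureTheory

/-- Left Riemann–Liouville integral of variable order `β`. -/
noncomputable def leftRLint (a : ℝ) (β : ℝ → ℝ → ℝ) (y : ℝ → ℝ) (t : ℝ) : ℝ :=
  ∫ τ in a..t, (t - τ) ^ (β t τ - 1) / Real.Gamma (β t τ) * y τ

/-- Right Riemann–Liouville integral of variable order `β`. -/
noncomputable def rightRLint (b : ℝ) (β : ℝ → ℝ → ℝ) (g : ℝ → ℝ) (t : ℝ) : ℝ :=
  ∫ τ in t..b, (τ - t) ^ (β τ t - 1) / Real.Gamma (β τ t) * g τ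

/-- Right Riemann–Liouville integral of variable order `1 − α`. -/
noncomputable def rightRLint1m (b : ℝ) (α : ℝ → ℝ → ℝ) (g : ℝ → ℝ) (t : ℝ) : ℝ :=
  ∫ τ in t..b, (τ - t) ^ (-α τ t) / Real.Gamma (1 - α τ t) * g τ

/-- Left Caputo derivative of variable order `α` of a `C¹` function with derivative `η'`. -/
noncomputable def leftCaputo (a : ℝ) (α : ℝ → ℝ → ℝ) (η' : ℝ → ℝ) (t : ℝ) : ℝ :=
  ∫ τ in a..t, (t - τ) ^ (-α t τ) / Real.Gamma (1 - α t τ) * η' τ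

/-- Right Riemann–Liouville derivative of variable order `α`:
`(ₜD^α_b g)(t) = −(d/dt)(ₜI^{1−α}_b g)(t)`. -/
noncomputable def rightRLderiv (b : ℝ) (α : ℝ → ℝ → ℝ) (g : ℝ → ℝ) (t : ℝ) : ℝ :=
  -(deriv (rightRLint1m b α g) t)

/-!
Both fractional terms come down to one exchange of the order of integration over the triangle
`a < τ < t ≤ b`. The Caputo derivative of order `α` is the Riemann–Liouville integral of order
`1 - α` applied to `η'`, and for orders in `[1/n, 1]` the Riemann–Liouville kernel
`(t - τ)^(β - 1) / Γ(β)` is dominated by `C ((t - τ)^(1/n - 1) + 1)`, which is integrable on the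
triangle, so Fubini's theorem applies. The `h₃`-term and, after the exchange, the Caputo term are
then finished by classical integration by parts, whose boundary terms vanish since
`η a = η b = 0`.
-/

open Set

theorem Real.measurable_Gamma : Measurable Real.Gamma := by
  refine measurable_of_tendsto_metrizable (f := fun n s => Real.GammaSeq s n) (fun n => ?_)
    (tendsto_pi_nhds.2 Real.GammaSeq_tendsto_Gamma)
  unfold Real.GammaSeq
  fun_prop

lemma exists_forall_inv_Gamma_le {u : ℝ} (hu : 0 < u) (v : ℝ) :
    ∃ M, ∀ s ∈ Icc u v, (Real.Gamma s)⁻¹ ≤ M := by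
  have hcont : ContinuousOn (fun s => (Real.Gamma s)⁻¹) (Icc u v) := fun s hs =>
    have hs : 0 < s := hu.trans_le hs.1
    ((Real.differentiableAt_Gamma fun m => by linarith [m.cast_nonneg (α := ℝ)]).continuousAt.inv₀
      (Real.Gamma_pos_of_pos hs).ne').continuousWithinAt
  obtain ⟨M, hM⟩ := isCompact_Icc.exists_bound_of_continuousOn hcont
  exact ⟨M, fun s hs => (le_abs_self _).trans (hM s hs)⟩

lemma Real.rpow_le_rpow_add_one {x e e' : ℝ} (hx : 0 < x) (he' : e' ≤ e) (he : e ≤ 0) :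
    x ^ e ≤ x ^ e' + 1 := by
  rcases le_total x 1 with hx1 | hx1
  · linarith [Real.rpow_le_rpow_of_exponent_ge hx hx1 he', zero_le_one (α := ℝ)]
  · linarith [Real.rpow_le_one_of_one_le_of_nonpos hx1 he, Real.rpow_nonneg hx.le e']

lemma exists_abs_rpow_sub_one_div_Gamma_le {δ : ℝ} (hδ : 0 < δ) :
    ∃ M, ∀ s ∈ Icc δ 1, ∀ x > 0, |x ^ (s - 1) / Real.Gamma s| ≤ M * (x ^ (δ - 1) + 1) := by
  obtain ⟨M, hM⟩ := exists_forall_inv_Gamma_le hδ 1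
  refine ⟨M, fun s hs x hx => ?_⟩
  have hΓ : 0 < (Real.Gamma s)⁻¹ := inv_pos.2 (Real.Gamma_pos_of_pos (hδ.trans_le hs.1))
  rw [div_eq_mul_inv, abs_of_nonneg (by positivity), mul_comm]
  exact mul_le_mul (hM s hs)
    (Real.rpow_le_rpow_add_one hx (by linarith [hs.1]) (by linarith [hs.2])) (by positivity)
    (hΓ.le.trans (hM s hs))

section TriangleIntegral

variable {a b : ℝ}

local notation "μ" => volume.restrict (Ioc a b)

lemma integrableOn_Ioc_rpow_add_one {r : ℝ} (hr : -1 < r) (c : ℝ) :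
    IntegrableOn (fun x : ℝ => x ^ r + 1) (Ioc 0 c) := by
  rcases le_total 0 c with hc | hc
  · exact ((intervalIntegrable_iff_integrableOn_Ioc_of_le hc).1
      (intervalIntegral.intervalIntegrable_rpow' hr)).add (integrableOn_const measure_Ioc_lt_top.ne)
  · simp [Ioc_eq_empty_of_le hc]

lemma integrable_indicator_lt_of_abs_le {F : ℝ → ℝ → ℝ} {C r : ℝ} (hr : -1 < r)
    (hF : AEStronglyMeasurable (Function.uncurry F) (Measure.prod μ μ))
    (hbd : ∀ t ∈ Ioc a b, ∀ τ ∈ Ioc a b, τ < t → |F t τ| ≤ C * ((t - τ) ^ r + 1)) :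
    Integrable ({p : ℝ × ℝ | p.2 < p.1}.indicator (Function.uncurry F)) (Measure.prod μ μ) := by
  -- the majorant `1_{(a, b]}(τ) G(t - τ)` is a convolution integrand of two integrable functions
  set G : ℝ → ℝ := (Ioc 0 (b - a)).indicator fun x => x ^ r + 1
  have hG : Integrable
      (fun p : ℝ × ℝ => (Ioc a b).indicator (fun _ => (1 : ℝ)) p.2 * G (p.1 - p.2))
      (volume.prod volume) :=
    ((integrableOn_const measure_Ioc_lt_top.ne).integrable_indicator
      measurableSet_Ioc).convolution_integrand (ContinuousLinearMap.mul ℝ ℝ)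
      ((integrableOn_Ioc_rpow_add_one hr _).integrable_indicator measurableSet_Ioc)
  rw [Measure.prod_restrict] at hF ⊢
  refine (hG.restrict.const_mul |C|).mono' (hF.indicator
    (measurableSet_lt measurable_snd measurable_fst)) ?_
  filter_upwards [ae_restrict_mem (measurableSet_Ioc.prod measurableSet_Ioc)] with p ⟨ht, hτ⟩
  by_cases hlt : p.2 < p.1
  · have hx : p.1 - p.2 ∈ Ioc 0 (b - a) := ⟨sub_pos.2 hlt, by linarith [ht.2, hτ.1]⟩
    simp only [indicator_of_mem (show p ∈ {p : ℝ × ℝ | p.2 < p.1} from hlt),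
      indicator_of_mem hτ, indicator_of_mem hx, G, one_mul, Real.norm_eq_abs]
    exact (hbd _ ht _ hτ hlt).trans
      (mul_le_mul_of_nonneg_right (le_abs_self C) (by positivity))
  · simp only [indicator_of_notMem (show p ∉ {p : ℝ × ℝ | p.2 < p.1} from hlt), norm_zero]
    exact mul_nonneg (abs_nonneg C) (mul_nonneg (indicator_nonneg (fun _ _ => zero_le_one) _)
      (indicator_nonneg (fun x hx => add_nonneg (Real.rpow_nonneg hx.1.le r) zero_le_one) _))

lemma integral_indicator_lt_left {F : ℝ → ℝ → ℝ} {t : ℝ} (ht : t ∈ Ioc a b) :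
    ∫ τ, {p : ℝ × ℝ | p.2 < p.1}.indicator (Function.uncurry F) (t, τ) ∂μ =
      ∫ τ in a..t, F t τ := by
  have hset : Iio t ∩ Ioc a b = Ioo a t := by
    ext τ; simp only [mem_inter_iff, mem_Iio, mem_Ioc, mem_Ioo]
    constructor
    · rintro ⟨h, h', -⟩; exact ⟨h', h⟩
    · rintro ⟨h, h'⟩; exact ⟨h', h, h'.le.trans ht.2⟩
  calc ∫ τ, {p : ℝ × ℝ | p.2 < p.1}.indicator (Function.uncurry F) (t, τ) ∂μ
      = ∫ τ, (Iio t).indicator (F t) τ ∂μ := rfl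
    _ = ∫ τ in a..t, F t τ := by
      rw [integral_indicator measurableSet_Iio, Measure.restrict_restrict measurableSet_Iio, hset,
        intervalIntegral.integral_of_le ht.1.le, setIntegral_congr_set Ioo_ae_eq_Ioc]

lemma integral_indicator_lt_right {F : ℝ → ℝ → ℝ} {τ : ℝ} (hτ : τ ∈ Ioc a b) :
    ∫ t, {p : ℝ × ℝ | p.2 < p.1}.indicator (Function.uncurry F) (t, τ) ∂μ =
      ∫ t in τ..b, F t τ := by
  have hset : Ioi τ ∩ Ioc a b = Ioc τ b := by
    ext t; simp only [mem_inter_iff, mem_Ioi, mem_Ioc]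
    constructor
    · rintro ⟨h, -, h'⟩; exact ⟨h, h'⟩
    · rintro ⟨h, h'⟩; exact ⟨h, hτ.1.trans h, h'⟩
  calc ∫ t, {p : ℝ × ℝ | p.2 < p.1}.indicator (Function.uncurry F) (t, τ) ∂μ
      = ∫ t, (Ioi τ).indicator (F · τ) t ∂μ := rfl
    _ = ∫ t in τ..b, F t τ := by
      rw [integral_indicator measurableSet_Ioi, Measure.restrict_restrict measurableSet_Ioi, hset,
        intervalIntegral.integral_of_le hτ.2]

theorem intervalIntegral_intervalIntegral_swap_triangle (hab : a ≤ b) {F : ℝ → ℝ → ℝ}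
    (hF : Integrable ({p : ℝ × ℝ | p.2 < p.1}.indicator (Function.uncurry F)) (Measure.prod μ μ)) :
    ∫ t in a..b, ∫ τ in a..t, F t τ = ∫ τ in a..b, ∫ t in τ..b, F t τ := by
  simp only [intervalIntegral.integral_of_le hab]
  rw [← setIntegral_congr_fun measurableSet_Ioc fun t ht => integral_indicator_lt_left ht,
    ← setIntegral_congr_fun measurableSet_Ioc fun τ hτ => integral_indicator_lt_right hτ]
  exact integral_integral_swap hF

theorem intervalIntegrable_intervalIntegral_triangle (hab : a ≤ b) {F : ℝ → ℝ → ℝ}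
    (hF : Integrable ({p : ℝ × ℝ | p.2 < p.1}.indicator (Function.uncurry F)) (Measure.prod μ μ)) :
    IntervalIntegrable (fun τ => ∫ t in τ..b, F t τ) volume a b := by
  rw [intervalIntegrable_iff_integrableOn_Ioc_of_le hab]
  refine hF.integral_prod_right.congr ?_
  filter_upwards [ae_restrict_mem measurableSet_Ioc] with τ hτ using integral_indicator_lt_right hτ

end TriangleIntegral

theorem intervalIntegral.integral_mul_deriv_eq_neg_of_eq_zero {a b : ℝ} {u u' v v' : ℝ → ℝ}
    (hu : ∀ x ∈ uIcc a b, HasDerivAt u (u' x) x) (hv : ∀ x ∈ uIcc a b, HasDerivAt v (v' x) x)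
    (hu' : IntervalIntegrable u' volume a b) (hv' : IntervalIntegrable v' volume a b)
    (ha : v a = 0) (hb : v b = 0) :
    ∫ x in a..b, u x * v' x = ∫ x in a..b, v x * -u' x := by
  rw [integral_mul_deriv_eq_deriv_mul hu hv hu' hv', ha, hb, mul_zero, mul_zero, sub_zero,
    zero_sub, ← integral_neg]
  congr 1 with x
  ring

theorem intervalIntegral.integral_add_add_add {a b : ℝ} {f₁ f₂ f₃ f₄ : ℝ → ℝ}
    (h₁ : IntervalIntegrable f₁ volume a b) (h₂ : IntervalIntegrable f₂ volume a b)
    (h₃ : IntervalIntegrable f₃ volume a b) (h₄ : IntervalIntegrable f₄ volume a b) :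
    ∫ t in a..b, (f₁ t + f₂ t + f₃ t + f₄ t) =
      (∫ t in a..b, f₁ t) + (∫ t in a..b, f₂ t) + (∫ t in a..b, f₃ t) + ∫ t in a..b, f₄ t := by
  rw [integral_add ((h₁.add h₂).add h₃) h₄, integral_add (h₁.add h₂) h₃, integral_add h₁ h₂]

noncomputable def rlKernel (β : ℝ → ℝ → ℝ) (t τ : ℝ) : ℝ :=
  (t - τ) ^ (β t τ - 1) / Real.Gamma (β t τ)

lemma measurable_rlKernel {β : ℝ → ℝ → ℝ} (hβ : Measurable (Function.uncurry β)) :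
    Measurable (Function.uncurry (rlKernel β)) :=
  ((measurable_fst.sub measurable_snd).pow (hβ.sub_const 1)).div (Real.measurable_Gamma.comp hβ)

lemma leftCaputo_eq_leftRLint (a : ℝ) (α : ℝ → ℝ → ℝ) (η' : ℝ → ℝ) :
    leftCaputo a α η' = leftRLint a (fun t τ => 1 - α t τ) η' := by
  funext t
  simp only [leftCaputo, leftRLint, sub_sub_cancel_left]

lemma rightRLint1m_eq_rightRLint (b : ℝ) (α : ℝ → ℝ → ℝ) (g : ℝ → ℝ) :
    rightRLint1m b α g = rightRLint b (fun t τ => 1 - α t τ) g := by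
  funext t
  simp only [rightRLint1m, rightRLint, sub_sub_cancel_left]

section FractionalIntegrationByParts

variable {a b δ : ℝ} {β : ℝ → ℝ → ℝ} {f g : ℝ → ℝ}

local notation "μ" => volume.restrict (Ioc a b)

lemma integral_mul_rlKernel_mul (τ : ℝ) :
    ∫ t in τ..b, f t * (rlKernel β t τ * g τ) = g τ * rightRLint b β f τ := by
  rw [rightRLint, ← intervalIntegral.integral_const_mul]
  congr 1 with t
  rw [rlKernel]
  ring

lemma integrable_indicator_lt_mul_rlKernel_mul (hδ : 0 < δ)
    (hβm : Measurable (Function.uncurry β)) (hβ : ∀ t ∈ Icc a b, ∀ τ ∈ Icc a b, β t τ ∈ Icc δ 1)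
    (hf : ContinuousOn f (Icc a b)) (hg : ContinuousOn g (Icc a b)) :
    Integrable ({p : ℝ × ℝ | p.2 < p.1}.indicator
      (Function.uncurry fun t τ => f t * (rlKernel β t τ * g τ))) (Measure.prod μ μ) := by
  obtain ⟨M, hM⟩ := exists_abs_rpow_sub_one_div_Gamma_le hδ
  obtain ⟨Mf, hMf⟩ := isCompact_Icc.exists_bound_of_continuousOn hf
  obtain ⟨Mg, hMg⟩ := isCompact_Icc.exists_bound_of_continuousOn hg
  refine integrable_indicator_lt_of_abs_le (C := Mf * M * Mg) (r := δ - 1) (by linarith) ?_ ?_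
  · exact (((hf.mono Ioc_subset_Icc_self).aestronglyMeasurable measurableSet_Ioc).comp_fst).mul
      ((measurable_rlKernel hβm).aestronglyMeasurable.mul
        ((hg.mono Ioc_subset_Icc_self).aestronglyMeasurable measurableSet_Ioc).comp_snd)
  · intro t ht τ hτ hlt
    have hk := hM _ (hβ t (Ioc_subset_Icc_self ht) τ (Ioc_subset_Icc_self hτ)) _ (sub_pos.2 hlt)
    have hft := hMf t (Ioc_subset_Icc_self ht)
    have hgτ := hMg τ (Ioc_subset_Icc_self hτ)
    rw [Real.norm_eq_abs] at hft hgτ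
    rw [abs_mul, abs_mul, rlKernel]
    calc |f t| * (|(t - τ) ^ (β t τ - 1) / Real.Gamma (β t τ)| * |g τ|)
        ≤ Mf * (M * ((t - τ) ^ (δ - 1) + 1) * Mg) := by
          gcongr
          exacts [(abs_nonneg _).trans hft, (abs_nonneg _).trans hk]
      _ = Mf * M * Mg * ((t - τ) ^ (δ - 1) + 1) := by ring

theorem intervalIntegrable_mul_rightRLint (hab : a ≤ b) (hδ : 0 < δ)
    (hβm : Measurable (Function.uncurry β)) (hβ : ∀ t ∈ Icc a b, ∀ τ ∈ Icc a b, β t τ ∈ Icc δ 1)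
    (hf : ContinuousOn f (Icc a b)) (hg : ContinuousOn g (Icc a b)) :
    IntervalIntegrable (fun t => g t * rightRLint b β f t) volume a b := by
  simpa only [integral_mul_rlKernel_mul] using intervalIntegrable_intervalIntegral_triangle hab
    (integrable_indicator_lt_mul_rlKernel_mul hδ hβm hβ hf hg)

theorem integral_mul_leftRLint_eq (hab : a ≤ b) (hδ : 0 < δ)
    (hβm : Measurable (Function.uncurry β)) (hβ : ∀ t ∈ Icc a b, ∀ τ ∈ Icc a b, β t τ ∈ Icc δ 1)
    (hf : ContinuousOn f (Icc a b)) (hg : ContinuousOn g (Icc a b)) :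
    ∫ t in a..b, f t * leftRLint a β g t = ∫ t in a..b, g t * rightRLint b β f t := by
  simp only [leftRLint, ← intervalIntegral.integral_const_mul, ← integral_mul_rlKernel_mul]
  exact intervalIntegral_intervalIntegral_swap_triangle hab
    (integrable_indicator_lt_mul_rlKernel_mul hδ hβm hβ hf hg)

theorem integral_mul_leftCaputo_eq {α : ℝ → ℝ → ℝ} {η η' : ℝ → ℝ} (hab : a ≤ b) (hδ : 0 < δ)
    (hαm : Measurable (Function.uncurry α))
    (hα : ∀ t ∈ Icc a b, ∀ τ ∈ Icc a b, 1 - α t τ ∈ Icc δ 1) (hf : ContinuousOn f (Icc a b))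
    (hη : ∀ t ∈ Icc a b, HasDerivAt η (η' t) t) (hη' : ContinuousOn η' (Icc a b))
    (hηa : η a = 0) (hηb : η b = 0)
    (hI : ∀ t ∈ Icc a b, DifferentiableAt ℝ (rightRLint1m b α f) t)
    (hI' : ContinuousOn (deriv (rightRLint1m b α f)) (Icc a b)) :
    ∫ t in a..b, f t * leftCaputo a α η' t = ∫ t in a..b, η t * rightRLderiv b α f t := by
  rw [← uIcc_of_le hab] at hη hI
  calc ∫ t in a..b, f t * leftCaputo a α η' t
      = ∫ t in a..b, rightRLint1m b α f t * η' t := by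
        rw [leftCaputo_eq_leftRLint, rightRLint1m_eq_rightRLint,
          integral_mul_leftRLint_eq (β := fun t τ => 1 - α t τ) hab hδ
            (hαm.const_sub 1) hα hf hη']
        simp only [mul_comm]
    _ = ∫ t in a..b, η t * rightRLderiv b α f t :=
        intervalIntegral.integral_mul_deriv_eq_neg_of_eq_zero (fun t ht => (hI t ht).hasDerivAt)
          hη (hI'.intervalIntegrable_of_Icc hab) (hη'.intervalIntegrable_of_Icc hab) hηa hηb

end FractionalIntegrationByParts

/-- First-variation rearrangement via classical and variable order fractional
integration by parts, using the boundary conditions `η(a) = η(b) = 0`. -/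
theorem first_variation_rearrangement (a b : ℝ) (hab : a < b) (n : ℕ) (hn : 2 ≤ n)
    (α β : ℝ → ℝ → ℝ)
    (hαm : Measurable (Function.uncurry α)) (hβm : Measurable (Function.uncurry β))
    (hα : ∀ t ∈ Set.Icc a b, ∀ τ ∈ Set.Icc a b, 0 < α t τ ∧ α t τ < 1 - 1 / (n : ℝ))
    (hβ : ∀ t ∈ Set.Icc a b, ∀ τ ∈ Set.Icc a b, 1 / (n : ℝ) < β t τ ∧ β t τ < 1)
    (h₂ h₅ : ℝ → ℝ)
    (h₂c : ContinuousOn h₂ (Set.Icc a b)) (h₅c : ContinuousOn h₅ (Set.Icc a b))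
    (h₃ : ℝ → ℝ) (h₃d : ∀ t ∈ Set.Icc a b, DifferentiableAt ℝ h₃ t)
    (h₃c : ContinuousOn (deriv h₃) (Set.Icc a b))
    (h₄ : ℝ → ℝ) (h₄c : ContinuousOn h₄ (Set.Icc a b))
    (h₄I : ∀ t ∈ Set.Icc a b, DifferentiableAt ℝ (rightRLint1m b α h₄) t)
    (h₄I' : ContinuousOn (deriv (rightRLint1m b α h₄)) (Set.Icc a b)) :
    ∀ η η' : ℝ → ℝ,
      (∀ t ∈ Set.Icc a b, HasDerivAt η (η' t) t) →
      ContinuousOn η' (Set.Icc a b) →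
      η a = 0 → η b = 0 →
      ContinuousOn (leftCaputo a α η') (Set.Icc a b) →
      ContinuousOn (leftRLint a β η) (Set.Icc a b) →
      (∫ t in a..b,
          (h₂ t * η t + h₃ t * η' t + h₄ t * leftCaputo a α η' t +
            h₅ t * leftRLint a β η t)) =
        ∫ t in a..b,
          η t * (h₂ t - deriv h₃ t + rightRLderiv b α h₄ t + rightRLint b β h₅ t) := by
  intro η η' hη hη' hηa hηb hCap hRL
  have hδ : (0 : ℝ) < 1 / n := by positivity
  have hαδ : ∀ t ∈ Icc a b, ∀ τ ∈ Icc a b, 1 - α t τ ∈ Icc (1 / (n : ℝ)) 1 := fun t ht τ hτ =>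
    ⟨by linarith [hα t ht τ hτ], by linarith [hα t ht τ hτ]⟩
  have hβδ : ∀ t ∈ Icc a b, ∀ τ ∈ Icc a b, β t τ ∈ Icc (1 / (n : ℝ)) 1 := fun t ht τ hτ =>
    ⟨(hβ t ht τ hτ).1.le, (hβ t ht τ hτ).2.le⟩
  have hηc : ContinuousOn η (Icc a b) := fun t ht => (hη t ht).continuousAt.continuousWithinAt
  have h₃c' : ContinuousOn h₃ (Icc a b) := fun t ht => (h₃d t ht).continuousAt.continuousWithinAt
  have hmul {f g : ℝ → ℝ} (hf : ContinuousOn f (Icc a b)) (hg : ContinuousOn g (Icc a b)) :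
      IntervalIntegrable (fun t => f t * g t) volume a b :=
    (hf.mul hg).intervalIntegrable_of_Icc hab.le
  have hT₃ : ∫ t in a..b, h₃ t * η' t = ∫ t in a..b, η t * -deriv h₃ t := by
    rw [← uIcc_of_le hab.le] at hη h₃d
    exact intervalIntegral.integral_mul_deriv_eq_neg_of_eq_zero
      (fun t ht => (h₃d t ht).hasDerivAt) hη (h₃c.intervalIntegrable_of_Icc hab.le)
      (hη'.intervalIntegrable_of_Icc hab.le) hηa hηb
  simp_rw [sub_eq_add_neg, mul_add]
  rw [intervalIntegral.integral_add_add_add (hmul h₂c hηc) (hmul h₃c' hη') (hmul h₄c hCap)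
      (hmul h₅c hRL),
    intervalIntegral.integral_add_add_add (hmul hηc h₂c)
      (hmul (g := fun t => -deriv h₃ t) hηc h₃c.neg) (hmul (g := rightRLderiv b α h₄) hηc h₄I'.neg)
      (intervalIntegrable_mul_rightRLint hab.le hδ hβm hβδ h₅c hηc),
    hT₃, integral_mul_leftCaputo_eq hab.le hδ hαm hαδ h₄c hη hη' hηa hηb h₄I h₄I',
    integral_mul_leftRLint_eq hab.le hδ hβm hβδ h₅c hηc]
  simp_rw [mul_comm (h₂ _)]
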